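/- Let S = [0,1]×[0,1], let a ≥ 1 and 1<p<2, and let R = [0,a]×[0,a^{p−1}]. Let f : (∂S, ‖·‖_{a,p}) → (∂R, |·|) be an orientation-preserving L-bilipschitz homeomorphism mapping the edges of S to the edges of R, where ‖(x₁,x₂)‖_{a,p} = max{a|x₁|, a^{p−1}|x₂|} and |·| is the Euclidean norm. Then there exists a homeomorphism F : S → R extending f such that (1/C(L,p)) J_F ≤ |DF|^p ≤ C(L,p) J_F almost everywhere in S, where the constant C(L,p) depends only on L and p, |DF| is the operator norm of the differential of F and J_F its Jacobian determinant. -/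

import Mathlib

open Complex MeasureTheory Metric Set

noncomputable section

/-- The closed axis-parallel rectangle `[0,w] × [0,h]` in `ℂ = ℝ²`. -/
def rectC (w h : ℝ) : Set ℂ := {z : ℂ | z.re ∈ Set.Icc 0 w ∧ z.im ∈ Set.Icc 0 h}

/-- Bottom edge of `[0,w] × [0,h]`. -/
def bottomE (w h : ℝ) : Set ℂ := {z : ℂ | z.im = 0 ∧ z.re ∈ Set.Icc 0 w}

/-- Top edge of `[0,w] × [0,h]`. -/
def topE (w h : ℝ) : Set ℂ := {z : ℂ | z.im = h ∧ z.re ∈ Set.Icc 0 w}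

/-- Left edge of `[0,w] × [0,h]`. -/
def leftE (w h : ℝ) : Set ℂ := {z : ℂ | z.re = 0 ∧ z.im ∈ Set.Icc 0 h}

/-- Right edge of `[0,w] × [0,h]`. -/
def rightE (w h : ℝ) : Set ℂ := {z : ℂ | z.re = w ∧ z.im ∈ Set.Icc 0 h}

/-- Boundary of `[0,w] × [0,h]`. -/
def bdryC (w h : ℝ) : Set ℂ := bottomE w h ∪ topE w h ∪ leftE w h ∪ rightE w h

/-- The distance induced by the modified sup-norm `‖(x₁,x₂)‖_{a,p} = max (a|x₁|) (a^(p-1)|x₂|)`. -/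
def dap (a p : ℝ) (x y : ℂ) : ℝ :=
  max (a * |x.re - y.re|) (a ^ (p - 1) * |x.im - y.im|)

open AffineMap Filter Topology

/-!
The extension is `F = A ∘ H ∘ V`. Normalize the four edge maps of `f` to `L`-bilipschitz
increasing self-maps `ψ₀, ψ₁` (left, right) and `Φ₀, Φ₁` (bottom, top) of `[0,1]`;
`V(x,y) = (x, (1-x) ψ₀ y + x ψ₁ y)` and `H(x,y) = ((1-y) Φ₀ x + y Φ₁ x, y)` are homeomorphisms of
the unit square, and `A = diag(a, a^(p-1))`. Where the edge maps are differentiable (a.e., by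
Rademacher) `DV = [[1,0],[s,q]]` and `DH = [[u,r],[0,1]]` with `u, q ∈ [1/L, L]` (convex
combinations of edge derivatives) and `|r|, |s| ≤ 1`. Hence `J_F = a · a^(p-1) · u q ≈ a^p`, and
since `a^(p-1) ≤ a` also `|DF| ≈ a`, so `|DF|^p ≈ a^p ≈ J_F`.
-/

def IsBilipOn {X Y : Type*} [PseudoMetricSpace X] [PseudoMetricSpace Y] (L : ℝ) (g : X → Y)
    (s : Set X) : Prop :=
  ∀ x ∈ s, ∀ y ∈ s, L⁻¹ * dist x y ≤ dist (g x) (g y) ∧ dist (g x) (g y) ≤ L * dist x y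

namespace IsBilipOn

variable {X Y : Type*} [PseudoMetricSpace X] [PseudoMetricSpace Y] {L : ℝ} {g : X → Y} {s : Set X}

lemma lipschitzOnWith (hg : IsBilipOn L g s) (hL : 0 ≤ L) : LipschitzOnWith L.toNNReal g s :=
  LipschitzOnWith.of_dist_le_mul fun x hx y hy => by
    rw [Real.coe_toNNReal _ hL]; exact (hg x hx y hy).2

lemma injOn {Z : Type*} [MetricSpace Z] {f : Z → Y} {t : Set Z} (hf : IsBilipOn L f t)
    (hL : 0 < L) : InjOn f t := fun x hx y hy hxy => by
  have := (hf x hx y hy).1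
  rw [hxy, dist_self] at this
  exact dist_le_zero.1 (nonpos_of_mul_nonpos_right this (inv_pos.2 hL))

lemma of_dist_mul {g : X → ℝ} {c : ℝ} (hc : 0 < c)
    (H : ∀ x ∈ s, ∀ y ∈ s, 1 / L * (c * dist x y) ≤ dist (g x) (g y) ∧
      dist (g x) (g y) ≤ L * (c * dist x y)) :
    IsBilipOn L (fun x => g x / c) s := fun x hx y hy => by
  obtain ⟨hlo, hhi⟩ := H x hx y hy
  rw [Real.dist_eq, ← sub_div, abs_div, abs_of_pos hc, ← Real.dist_eq, le_div_iff₀ hc,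
    div_le_iff₀ hc]
  exact ⟨(by ring : L⁻¹ * dist x y * c = 1 / L * (c * dist x y)).trans_le hlo,
    hhi.trans_eq (by ring)⟩

lemma slope_mem_Icc {g : ℝ → ℝ} {s : Set ℝ} (hg : IsBilipOn L g s) (hmono : MonotoneOn g s)
    {t u : ℝ} (ht : t ∈ s) (hu : u ∈ s) (hne : u ≠ t) : slope g t u ∈ Icc L⁻¹ L := by
  have hpos : 0 < |u - t| := abs_pos.2 (sub_ne_zero.2 hne)
  have hslope : slope g t u = |g u - g t| / |u - t| := by
    rw [slope_def_field, ← abs_div, abs_of_nonneg]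
    rcases lt_or_gt_of_ne hne with h | h
    · exact div_nonneg_of_nonpos (sub_nonpos.2 (hmono hu ht h.le)) (by linarith)
    · exact div_nonneg (sub_nonneg.2 (hmono ht hu h.le)) (by linarith)
  obtain ⟨hlo, hhi⟩ := hg u hu t ht
  rw [Real.dist_eq, Real.dist_eq] at hlo hhi
  rw [hslope]
  exact ⟨(le_div_iff₀ hpos).2 hlo, (div_le_iff₀ hpos).2 hhi⟩

lemma hasDerivAt_mem_Icc {g : ℝ → ℝ} {s : Set ℝ} (hg : IsBilipOn L g s) (hmono : MonotoneOn g s)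
    {t d : ℝ} (ht : s ∈ 𝓝 t) (hd : HasDerivAt g d t) : d ∈ Icc L⁻¹ L := by
  refine isClosed_Icc.mem_of_tendsto hd.tendsto_slope ?_
  filter_upwards [nhdsWithin_le_nhds ht, self_mem_nhdsWithin] with u hu hne
  exact hg.slope_mem_Icc hmono (mem_of_mem_nhds ht) hu hne

end IsBilipOn

lemma ContinuousOn.bijOn_Icc_of_strictMonoOn {α β : Type*} [ConditionallyCompleteLinearOrder α]
    [TopologicalSpace α] [OrderTopology α] [DenselyOrdered α] [LinearOrder β] [TopologicalSpace β]
    [OrderClosedTopology β] {f : α → β} {a b : α} (hab : a ≤ b)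
    (hc : ContinuousOn f (Icc a b)) (hm : StrictMonoOn f (Icc a b)) :
    BijOn f (Icc a b) (Icc (f a) (f b)) :=
  ⟨fun _ hx => ⟨hm.monotoneOn (left_mem_Icc.2 hab) hx hx.1,
      hm.monotoneOn hx (right_mem_Icc.2 hab) hx.2⟩,
    hm.injOn, hc.surjOn_Icc (left_mem_Icc.2 hab) (right_mem_Icc.2 hab)⟩

structure IsUnitBilip (L : ℝ) (g : ℝ → ℝ) : Prop where
  isBilipOn : IsBilipOn L g (Icc 0 1)
  map_zero : g 0 = 0
  map_one : g 1 = 1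

namespace IsUnitBilip

variable {L : ℝ} {g : ℝ → ℝ}

lemma continuousOn (hg : IsUnitBilip L g) (hL : 0 ≤ L) : ContinuousOn g (Icc 0 1) :=
  (hg.isBilipOn.lipschitzOnWith hL).continuousOn

lemma strictMonoOn (hg : IsUnitBilip L g) (hL : 0 < L) : StrictMonoOn g (Icc 0 1) :=
  (hg.continuousOn hL.le).strictMonoOn_of_injOn_Icc zero_le_one
    (by rw [hg.map_zero, hg.map_one]; exact zero_le_one) (hg.isBilipOn.injOn hL)

lemma mapsTo (hg : IsUnitBilip L g) (hL : 0 < L) : MapsTo g (Icc 0 1) (Icc 0 1) := fun t ht => by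
  have hm := (hg.strictMonoOn hL).monotoneOn
  rw [← hg.map_zero, ← hg.map_one]
  exact ⟨hm (left_mem_Icc.2 zero_le_one) ht ht.1, hm ht (right_mem_Icc.2 zero_le_one) ht.2⟩

lemma ae_hasDerivAt (hg : IsUnitBilip L g) (hL : 0 < L) :
    ∀ᵐ t, t ∈ Icc (0 : ℝ) 1 → HasDerivAt g (deriv g t) t ∧ deriv g t ∈ Icc L⁻¹ L := by
  filter_upwards [(hg.isBilipOn.lipschitzOnWith hL.le).ae_differentiableWithinAt_of_mem,
    Ioo_ae_eq_Icc.mem_iff] with t hdiff hIoo ht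
  have hnhds : Icc 0 1 ∈ 𝓝 t := Icc_mem_nhds (hIoo.2 ht).1 (hIoo.2 ht).2
  have hd := ((hdiff ht).differentiableAt hnhds).hasDerivAt
  exact ⟨hd, hg.isBilipOn.hasDerivAt_mem_Icc (hg.strictMonoOn hL).monotoneOn hnhds hd⟩

lemma bijOn_lineMap {x : ℝ} {g₀ g₁ : ℝ → ℝ} (h₀ : IsUnitBilip L g₀)
    (h₁ : IsUnitBilip L g₁) (hL : 0 < L) (hx : x ∈ Icc (0 : ℝ) 1) :
    BijOn (fun t => lineMap (g₀ t) (g₁ t) x) (Icc 0 1) (Icc 0 1) := by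
  have hbij := ContinuousOn.bijOn_Icc_of_strictMonoOn (f := fun t => lineMap (g₀ t) (g₁ t) x)
    zero_le_one ((h₀.continuousOn hL.le).lineMap (h₁.continuousOn hL.le) continuousOn_const)
    fun s hs t ht hst => lineMap_strict_mono_endpoints (h₀.strictMonoOn hL hs ht hst)
      (h₁.strictMonoOn hL hs ht hst) hx.1 hx.2
  simpa only [h₀.map_zero, h₁.map_zero, h₀.map_one, h₁.map_one, lineMap_same_apply] using hbij

end IsUnitBilip

lemma HasFDerivAt.lineMap_comp {E : Type*} [NormedAddCommGroup E] [NormedSpace ℝ E]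
    {g₀ g₁ : ℝ → ℝ} {X T : E → ℝ} {X' T' : E →L[ℝ] ℝ} {z : E} {d₀ d₁ : ℝ}
    (hX : HasFDerivAt X X' z) (hT : HasFDerivAt T T' z)
    (h₀ : HasDerivAt g₀ d₀ (T z)) (h₁ : HasDerivAt g₁ d₁ (T z)) :
    HasFDerivAt (fun w => lineMap (g₀ (T w)) (g₁ (T w)) (X w))
      ((g₁ (T z) - g₀ (T z)) • X' + lineMap d₀ d₁ (X z) • T') z := by
  simp only [lineMap_apply_ring']
  refine ((hX.mul ((h₁.comp_hasFDerivAt z hT).sub (h₀.comp_hasFDerivAt z hT))).add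
    (h₀.comp_hasFDerivAt z hT)).congr_fderiv ?_
  ext w
  simp
  ring

def matCLM (A B C D : ℝ) : ℂ →L[ℝ] ℂ :=
  equivRealProdCLM.symm.toContinuousLinearMap ∘L
    ((A • reCLM + B • imCLM).prod (C • reCLM + D • imCLM))

@[simp] lemma matCLM_apply_re (A B C D : ℝ) (w : ℂ) :
    (matCLM A B C D w).re = A * w.re + B * w.im := by
  simp [matCLM]

@[simp] lemma matCLM_apply_im (A B C D : ℝ) (w : ℂ) :
    (matCLM A B C D w).im = C * w.re + D * w.im := by
  simp [matCLM]

lemma matCLM_comp (A B C D A' B' C' D' : ℝ) :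
    matCLM A B C D ∘L matCLM A' B' C' D' =
      matCLM (A * A' + B * C') (A * B' + B * D') (C * A' + D * C') (C * B' + D * D') := by
  ext w : 1
  apply Complex.ext <;> simp <;> ring

lemma det_matCLM (A B C D : ℝ) : (matCLM A B C D).det = A * D - B * C := by
  rw [ContinuousLinearMap.det, ← LinearMap.det_toMatrix Complex.basisOneI, Matrix.det_fin_two]
  simp [LinearMap.toMatrix_apply, Complex.coe_basisOneI_repr]

lemma norm_matCLM_le (A B C D : ℝ) : ‖matCLM A B C D‖ ≤ |A| + |B| + |C| + |D| := by
  refine ContinuousLinearMap.opNorm_le_bound _ (by positivity) fun w => ?_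
  have hre := Complex.abs_re_le_norm w
  have him := Complex.abs_im_le_norm w
  calc ‖matCLM A B C D w‖ ≤ |A * w.re + B * w.im| + |C * w.re + D * w.im| := by
        simpa using Complex.norm_le_abs_re_add_abs_im (matCLM A B C D w)
    _ ≤ (|A| * |w.re| + |B| * |w.im|) + (|C| * |w.re| + |D| * |w.im|) := by
        gcongr <;> exact (abs_add_le _ _).trans_eq (by rw [abs_mul, abs_mul])
    _ ≤ (|A| + |B| + |C| + |D|) * ‖w‖ := by
        nlinarith [abs_nonneg A, abs_nonneg B, abs_nonneg C, abs_nonneg D]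

lemma HasFDerivAt.complex_mk {P Q : ℂ → ℝ} {z : ℂ} {A B C D : ℝ}
    (hP : HasFDerivAt P (A • reCLM + B • imCLM) z) (hQ : HasFDerivAt Q (C • reCLM + D • imCLM) z) :
    HasFDerivAt (fun w => (⟨P w, Q w⟩ : ℂ)) (matCLM A B C D) z :=
  equivRealProdCLM.symm.hasFDerivAt.comp z (hP.prodMk hQ)

lemma ContinuousOn.complex_mk {P Q : ℂ → ℝ} {s : Set ℂ}
    (hP : ContinuousOn P s) (hQ : ContinuousOn Q s) :
    ContinuousOn (fun w => (⟨P w, Q w⟩ : ℂ)) s :=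
  equivRealProdCLM.symm.continuous.comp_continuousOn (hP.prodMk hQ)

lemma bijOn_complex_mk_re {φ : ℝ → ℝ → ℝ} {I J J' : Set ℝ} (hφ : ∀ x ∈ I, BijOn (φ x) J J') :
    BijOn (fun z : ℂ => (⟨z.re, φ z.re z.im⟩ : ℂ)) (I ×ℂ J) (I ×ℂ J') := by
  refine ⟨fun z hz => ⟨hz.1, (hφ _ hz.1).mapsTo hz.2⟩, fun z hz w hw hzw => ?_, fun w hw => ?_⟩
  · have hre : z.re = w.re := by simpa using congrArg Complex.re hzw
    have him : φ w.re z.im = φ w.re w.im := by simpa [hre] using congrArg Complex.im hzw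
    exact Complex.ext hre ((hφ _ hw.1).injOn hz.2 hw.2 him)
  · obtain ⟨y, hy, hxy⟩ := (hφ _ hw.1).surjOn hw.2
    exact ⟨⟨w.re, y⟩, ⟨hw.1, hy⟩, Complex.ext rfl hxy⟩

lemma bijOn_complex_mk_im {φ : ℝ → ℝ → ℝ} {I I' J : Set ℝ} (hφ : ∀ y ∈ J, BijOn (φ y) I I') :
    BijOn (fun z : ℂ => (⟨φ z.im z.re, z.im⟩ : ℂ)) (I ×ℂ J) (I' ×ℂ J) := by
  refine ⟨fun z hz => ⟨(hφ _ hz.2).mapsTo hz.1, hz.2⟩, fun z hz w hw hzw => ?_, fun w hw => ?_⟩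
  · have him : z.im = w.im := by simpa using congrArg Complex.im hzw
    have hre : φ w.im z.re = φ w.im w.re := by simpa [him] using congrArg Complex.re hzw
    exact Complex.ext ((hφ _ hw.2).injOn hz.1 hw.1 hre) him
  · obtain ⟨x, hx, hxy⟩ := (hφ _ hw.2).surjOn hw.1
    exact ⟨⟨x, w.im⟩, ⟨hx, hw.2⟩, Complex.ext hxy rfl⟩

lemma bijOn_matCLM_diag {a h : ℝ} (ha : 0 < a) (hh : 0 < h) :
    BijOn (matCLM a 0 0 h) (rectC 1 1) (rectC a h) := by
  have hscale {c : ℝ} (hc : 0 < c) : BijOn (c * ·) (Icc 0 1) (Icc 0 c) := by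
    simpa using ContinuousOn.bijOn_Icc_of_strictMonoOn zero_le_one
      (continuous_const_mul c).continuousOn ((strictMono_mul_left_of_pos hc).strictMonoOn _)
  refine ((bijOn_complex_mk_re fun _ _ => hscale hh).comp
    (bijOn_complex_mk_im (J := Icc 0 1) fun _ _ => hscale ha)).congr fun z _ => ?_
  apply Complex.ext <;> simp

lemma Complex.ae_re {P : ℝ → Prop} (h : ∀ᵐ t, P t) : ∀ᵐ z : ℂ, P z.re :=
  (Measure.quasiMeasurePreserving_fst.comp
    Complex.volume_preserving_equiv_real_prod.quasiMeasurePreserving).ae h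

lemma Complex.ae_im {P : ℝ → Prop} (h : ∀ᵐ t, P t) : ∀ᵐ z : ℂ, P z.im :=
  (Measure.quasiMeasurePreserving_snd.comp
    Complex.volume_preserving_equiv_real_prod.quasiMeasurePreserving).ae h

lemma measurableSet_rectC (w h : ℝ) : MeasurableSet (rectC w h) :=
  (measurableSet_Icc.preimage measurable_re).inter (measurableSet_Icc.preimage measurable_im)

lemma matCLM_diag_comp_shears (a h u r s q : ℝ) :
    matCLM a 0 0 h ∘L matCLM u r 0 1 ∘L matCLM 1 0 s q =
      matCLM (a * (u + r * s)) (a * (r * q)) (h * s) (h * q) := by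
  rw [matCLM_comp, matCLM_comp]
  congr 1 <;> ring

section ShearBounds

variable {a h L u r s q : ℝ}

lemma norm_diag_comp_shears_le (hL : 1 ≤ L) (hu : u ∈ Icc L⁻¹ L) (hq : q ∈ Icc L⁻¹ L)
    (hr : |r| ≤ 1) (hs : |s| ≤ 1) (hh : 0 ≤ h) (hha : h ≤ a) :
    ‖matCLM a 0 0 h ∘L matCLM u r 0 1 ∘L matCLM 1 0 s q‖ ≤ 5 * L ^ 3 * a := by
  have hL0 : 0 < L⁻¹ := by positivity
  have ha : 0 ≤ a := hh.trans hha
  rw [matCLM_diag_comp_shears]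
  refine (norm_matCLM_le _ _ _ _).trans ?_
  have hq0 : 0 < q := hL0.trans_le hq.1
  have hrs : |u + r * s| ≤ L + 1 := by
    refine (abs_add_le _ _).trans ?_
    rw [abs_of_pos (hL0.trans_le hu.1), abs_mul]
    nlinarith [abs_nonneg r, abs_nonneg s, hu.2]
  simp only [abs_mul, abs_of_nonneg ha, abs_of_nonneg hh, abs_of_pos hq0]
  have hrq : |r| * q ≤ L := by nlinarith [abs_nonneg r, hq.2]
  have hL3 : L ≤ L ^ 3 := le_self_pow₀ hL (by norm_num)
  nlinarith [mul_le_mul_of_nonneg_left hrs ha, mul_le_mul_of_nonneg_left hrq ha,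
    mul_le_mul hha hs (abs_nonneg s) ha, mul_le_mul hha hq.2 hq0.le ha,
    mul_le_mul_of_nonneg_left hL3 ha]

lemma le_norm_diag_comp_shears (hL : 1 ≤ L) (hu : u ∈ Icc L⁻¹ L) (hq : q ∈ Icc L⁻¹ L)
    (hs : |s| ≤ 1) (ha : 0 ≤ a) :
    a ≤ 5 * L ^ 3 * ‖matCLM a 0 0 h ∘L matCLM u r 0 1 ∘L matCLM 1 0 s q‖ := by
  set T := matCLM a 0 0 h ∘L matCLM u r 0 1 ∘L matCLM 1 0 s q
  have hL0 : 0 < L := by linarith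
  have hT : T ⟨q, -s⟩ = (a * u * q : ℝ) := by
    apply Complex.ext <;> simp [T, matCLM_diag_comp_shears] <;> ring
  have hv : ‖(⟨q, -s⟩ : ℂ)‖ ≤ 2 * L := by
    refine (Complex.norm_le_abs_re_add_abs_im _).trans ?_
    simp only [abs_neg]
    rw [abs_of_pos ((inv_pos.2 hL0).trans_le hq.1)]
    linarith [hq.2]
  have huq : L⁻¹ * L⁻¹ ≤ u * q :=
    mul_le_mul hu.1 hq.1 (by positivity) ((inv_pos.2 hL0).le.trans hu.1)
  have hauq : a * (L⁻¹ * L⁻¹) ≤ ‖T‖ * (2 * L) := by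
    calc a * (L⁻¹ * L⁻¹) ≤ a * u * q := by rw [mul_assoc]; exact mul_le_mul_of_nonneg_left huq ha
      _ = ‖T ⟨q, -s⟩‖ := by
        rw [hT, Complex.norm_real, Real.norm_eq_abs, abs_of_nonneg (by nlinarith)]
      _ ≤ ‖T‖ * (2 * L) := (T.le_opNorm _).trans (by gcongr)
  calc a = a * (L⁻¹ * L⁻¹) * L ^ 2 := by field_simp
    _ ≤ ‖T‖ * (2 * L) * L ^ 2 := by gcongr
    _ ≤ 5 * L ^ 3 * ‖T‖ := by nlinarith [norm_nonneg T, pow_pos hL0 3]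

lemma abs_det_diag_comp_shears (hL : 0 < L) (hu : u ∈ Icc L⁻¹ L) (hq : q ∈ Icc L⁻¹ L)
    (ha : 0 ≤ a) (hh : 0 ≤ h) :
    |(matCLM a 0 0 h ∘L matCLM u r 0 1 ∘L matCLM 1 0 s q).det| ≤ L ^ 2 * (a * h) ∧
      a * h ≤ L ^ 2 * |(matCLM a 0 0 h ∘L matCLM u r 0 1 ∘L matCLM 1 0 s q).det| := by
  have hu0 : 0 < u := (inv_pos.2 hL).trans_le hu.1
  have hq0 : 0 < q := (inv_pos.2 hL).trans_le hq.1
  have hdet : (matCLM a 0 0 h ∘L matCLM u r 0 1 ∘L matCLM 1 0 s q).det = a * h * (u * q) := by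
    rw [matCLM_diag_comp_shears, det_matCLM]; ring
  have huq : u * q ≤ L ^ 2 := by nlinarith [hu.2, hq.2]
  have huq' : 1 ≤ L ^ 2 * (u * q) := by
    have := mul_le_mul hu.1 hq.1 (inv_pos.2 hL).le hu0.le
    calc (1 : ℝ) = L ^ 2 * (L⁻¹ * L⁻¹) := by field_simp
      _ ≤ L ^ 2 * (u * q) := by gcongr
  rw [hdet, abs_of_nonneg (by positivity)]
  constructor
  · calc a * h * (u * q) ≤ a * h * L ^ 2 := by gcongr
      _ = L ^ 2 * (a * h) := by ring
  · calc a * h ≤ a * h * (L ^ 2 * (u * q)) := le_mul_of_one_le_right (by positivity) huq'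
      _ = L ^ 2 * (a * h * (u * q)) := by ring

end ShearBounds

def vertInterp (ψ₀ ψ₁ : ℝ → ℝ) (z : ℂ) : ℂ := ⟨z.re, lineMap (ψ₀ z.im) (ψ₁ z.im) z.re⟩

def horizInterp (Φ₀ Φ₁ : ℝ → ℝ) (z : ℂ) : ℂ := ⟨lineMap (Φ₀ z.re) (Φ₁ z.re) z.im, z.im⟩

def rectExt (a h : ℝ) (ψ₀ ψ₁ Φ₀ Φ₁ : ℝ → ℝ) : ℂ → ℂ :=
  matCLM a 0 0 h ∘ horizInterp Φ₀ Φ₁ ∘ vertInterp ψ₀ ψ₁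

section RectExt

variable {L a h : ℝ} {ψ₀ ψ₁ Φ₀ Φ₁ : ℝ → ℝ}

lemma hasFDerivAt_vertInterp {z : ℂ} {d₀ d₁ : ℝ} (h₀ : HasDerivAt ψ₀ d₀ z.im)
    (h₁ : HasDerivAt ψ₁ d₁ z.im) :
    HasFDerivAt (vertInterp ψ₀ ψ₁) (matCLM 1 0 (ψ₁ z.im - ψ₀ z.im) (lineMap d₀ d₁ z.re)) z :=
  HasFDerivAt.complex_mk (by rw [one_smul, zero_smul, add_zero]; exact reCLM.hasFDerivAt)
    (reCLM.hasFDerivAt.lineMap_comp imCLM.hasFDerivAt h₀ h₁)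

lemma hasFDerivAt_horizInterp {z : ℂ} {c₀ c₁ : ℝ} (h₀ : HasDerivAt Φ₀ c₀ z.re)
    (h₁ : HasDerivAt Φ₁ c₁ z.re) :
    HasFDerivAt (horizInterp Φ₀ Φ₁) (matCLM (lineMap c₀ c₁ z.im) (Φ₁ z.re - Φ₀ z.re) 0 1) z :=
  HasFDerivAt.complex_mk
    (by rw [add_comm]; exact imCLM.hasFDerivAt.lineMap_comp reCLM.hasFDerivAt h₀ h₁)
    (by rw [one_smul, zero_smul, zero_add]; exact imCLM.hasFDerivAt)

lemma hasFDerivAt_rectExt {z : ℂ} {c₀ c₁ d₀ d₁ : ℝ} (hc₀ : HasDerivAt Φ₀ c₀ z.re)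
    (hc₁ : HasDerivAt Φ₁ c₁ z.re) (hd₀ : HasDerivAt ψ₀ d₀ z.im) (hd₁ : HasDerivAt ψ₁ d₁ z.im) :
    HasFDerivAt (rectExt a h ψ₀ ψ₁ Φ₀ Φ₁)
      (matCLM a 0 0 h ∘L matCLM (lineMap c₀ c₁ (vertInterp ψ₀ ψ₁ z).im) (Φ₁ z.re - Φ₀ z.re) 0 1 ∘L
        matCLM 1 0 (ψ₁ z.im - ψ₀ z.im) (lineMap d₀ d₁ z.re)) z :=
  (matCLM a 0 0 h).hasFDerivAt.comp z
    ((hasFDerivAt_horizInterp (z := vertInterp ψ₀ ψ₁ z) hc₀ hc₁).comp z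
      (hasFDerivAt_vertInterp hd₀ hd₁))

lemma IsUnitBilip.bijOn_vertInterp (h₀ : IsUnitBilip L ψ₀) (h₁ : IsUnitBilip L ψ₁) (hL : 0 < L) :
    BijOn (vertInterp ψ₀ ψ₁) (rectC 1 1) (rectC 1 1) :=
  bijOn_complex_mk_re fun _ hx => h₀.bijOn_lineMap h₁ hL hx

lemma IsUnitBilip.bijOn_horizInterp (h₀ : IsUnitBilip L Φ₀) (h₁ : IsUnitBilip L Φ₁) (hL : 0 < L) :
    BijOn (horizInterp Φ₀ Φ₁) (rectC 1 1) (rectC 1 1) :=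
  bijOn_complex_mk_im fun _ hy => h₀.bijOn_lineMap h₁ hL hy

lemma IsUnitBilip.bijOn_rectExt (hψ₀ : IsUnitBilip L ψ₀) (hψ₁ : IsUnitBilip L ψ₁)
    (hΦ₀ : IsUnitBilip L Φ₀) (hΦ₁ : IsUnitBilip L Φ₁) (hL : 0 < L) (ha : 0 < a) (hh : 0 < h) :
    BijOn (rectExt a h ψ₀ ψ₁ Φ₀ Φ₁) (rectC 1 1) (rectC a h) :=
  (bijOn_matCLM_diag ha hh).comp ((hΦ₀.bijOn_horizInterp hΦ₁ hL).comp (hψ₀.bijOn_vertInterp hψ₁ hL))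

lemma IsUnitBilip.continuousOn_vertInterp (h₀ : IsUnitBilip L ψ₀) (h₁ : IsUnitBilip L ψ₁)
    (hL : 0 ≤ L) : ContinuousOn (vertInterp ψ₀ ψ₁) (rectC 1 1) :=
  continuous_re.continuousOn.complex_mk <|
    ((h₀.continuousOn hL).comp continuous_im.continuousOn fun _ hz => hz.2).lineMap
      ((h₁.continuousOn hL).comp continuous_im.continuousOn fun _ hz => hz.2)
      continuous_re.continuousOn

lemma IsUnitBilip.continuousOn_horizInterp (h₀ : IsUnitBilip L Φ₀) (h₁ : IsUnitBilip L Φ₁)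
    (hL : 0 ≤ L) : ContinuousOn (horizInterp Φ₀ Φ₁) (rectC 1 1) :=
  ContinuousOn.complex_mk
    (((h₀.continuousOn hL).comp continuous_re.continuousOn fun _ hz => hz.1).lineMap
      ((h₁.continuousOn hL).comp continuous_re.continuousOn fun _ hz => hz.1)
      continuous_im.continuousOn)
    continuous_im.continuousOn

lemma IsUnitBilip.continuousOn_rectExt (hψ₀ : IsUnitBilip L ψ₀) (hψ₁ : IsUnitBilip L ψ₁)
    (hΦ₀ : IsUnitBilip L Φ₀) (hΦ₁ : IsUnitBilip L Φ₁) (hL : 0 < L) :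
    ContinuousOn (rectExt a h ψ₀ ψ₁ Φ₀ Φ₁) (rectC 1 1) :=
  (matCLM a 0 0 h).continuous.comp_continuousOn <|
    (hΦ₀.continuousOn_horizInterp hΦ₁ hL.le).comp (hψ₀.continuousOn_vertInterp hψ₁ hL.le)
      (hψ₀.bijOn_vertInterp hψ₁ hL).mapsTo

lemma IsUnitBilip.ae_rectExt (hψ₀ : IsUnitBilip L ψ₀) (hψ₁ : IsUnitBilip L ψ₁)
    (hΦ₀ : IsUnitBilip L Φ₀) (hΦ₁ : IsUnitBilip L Φ₁) (hL : 1 ≤ L) (hh : 0 ≤ h) (hha : h ≤ a) :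
    ∀ᵐ z ∂volume.restrict (rectC 1 1), DifferentiableAt ℝ (rectExt a h ψ₀ ψ₁ Φ₀ Φ₁) z ∧
      ‖fderiv ℝ (rectExt a h ψ₀ ψ₁ Φ₀ Φ₁) z‖ ≤ 5 * L ^ 3 * a ∧
      a ≤ 5 * L ^ 3 * ‖fderiv ℝ (rectExt a h ψ₀ ψ₁ Φ₀ Φ₁) z‖ ∧
      |(fderiv ℝ (rectExt a h ψ₀ ψ₁ Φ₀ Φ₁) z).det| ≤ L ^ 2 * (a * h) ∧
      a * h ≤ L ^ 2 * |(fderiv ℝ (rectExt a h ψ₀ ψ₁ Φ₀ Φ₁) z).det| := by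
  have hL0 : 0 < L := by linarith
  rw [ae_restrict_iff' (measurableSet_rectC 1 1)]
  filter_upwards [Complex.ae_re (hΦ₀.ae_hasDerivAt hL0), Complex.ae_re (hΦ₁.ae_hasDerivAt hL0),
    Complex.ae_im (hψ₀.ae_hasDerivAt hL0), Complex.ae_im (hψ₁.ae_hasDerivAt hL0)]
    with z hΦ₀z hΦ₁z hψ₀z hψ₁z hz
  obtain ⟨hc₀, hc₀L⟩ := hΦ₀z hz.1
  obtain ⟨hc₁, hc₁L⟩ := hΦ₁z hz.1
  obtain ⟨hd₀, hd₀L⟩ := hψ₀z hz.2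
  obtain ⟨hd₁, hd₁L⟩ := hψ₁z hz.2
  have hD := hasFDerivAt_rectExt (a := a) (h := h) hc₀ hc₁ hd₀ hd₁
  have hu := (convex_Icc L⁻¹ L).lineMap_mem hc₀L hc₁L ((hψ₀.bijOn_vertInterp hψ₁ hL0).mapsTo hz).2
  have hq := (convex_Icc L⁻¹ L).lineMap_mem hd₀L hd₁L hz.1
  have hr : |Φ₁ z.re - Φ₀ z.re| ≤ 1 := abs_sub_le_of_nonneg_of_le
    (hΦ₁.mapsTo hL0 hz.1).1 (hΦ₁.mapsTo hL0 hz.1).2 (hΦ₀.mapsTo hL0 hz.1).1 (hΦ₀.mapsTo hL0 hz.1).2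
  have hs : |ψ₁ z.im - ψ₀ z.im| ≤ 1 := abs_sub_le_of_nonneg_of_le
    (hψ₁.mapsTo hL0 hz.2).1 (hψ₁.mapsTo hL0 hz.2).2 (hψ₀.mapsTo hL0 hz.2).1 (hψ₀.mapsTo hL0 hz.2).2
  rw [hD.fderiv]
  exact ⟨hD.differentiableAt, norm_diag_comp_shears_le hL hu hq hr hs hh hha,
    le_norm_diag_comp_shears hL hu hq hs (hh.trans hha),
    abs_det_diag_comp_shears hL0 hu hq (hh.trans hha) hh⟩

end RectExt

lemma dap_of_re_eq {a p : ℝ} {x y : ℂ} (ha : 0 ≤ a) (hxy : x.re = y.re) :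
    dap a p x y = a ^ (p - 1) * dist x.im y.im := by
  rw [dap, hxy, sub_self, abs_zero, mul_zero, Real.dist_eq]
  exact max_eq_right (by positivity)

lemma dap_of_im_eq {a p : ℝ} {x y : ℂ} (ha : 0 ≤ a) (hxy : x.im = y.im) :
    dap a p x y = a * dist x.re y.re := by
  rw [dap, hxy, sub_self, abs_zero, mul_zero, Real.dist_eq]
  exact max_eq_left (by positivity)

structure MapsEdges (f : ℂ → ℂ) (w h : ℝ) : Prop where
  bottom : MapsTo f (bottomE 1 1) (bottomE w h)
  top : MapsTo f (topE 1 1) (topE w h)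
  left : MapsTo f (leftE 1 1) (leftE w h)
  right : MapsTo f (rightE 1 1) (rightE w h)

namespace MapsEdges

variable {f : ℂ → ℂ} {L a p w h : ℝ}

lemma bottom_im (hE : MapsEdges f w h) {x : ℝ} (hx : x ∈ Icc (0 : ℝ) 1) : (f ⟨x, 0⟩).im = 0 :=
  (hE.bottom (show (⟨x, 0⟩ : ℂ) ∈ bottomE 1 1 from ⟨rfl, hx⟩)).1

lemma top_im (hE : MapsEdges f w h) {x : ℝ} (hx : x ∈ Icc (0 : ℝ) 1) : (f ⟨x, 1⟩).im = h :=
  (hE.top (show (⟨x, 1⟩ : ℂ) ∈ topE 1 1 from ⟨rfl, hx⟩)).1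

lemma left_re (hE : MapsEdges f w h) {y : ℝ} (hy : y ∈ Icc (0 : ℝ) 1) : (f ⟨0, y⟩).re = 0 :=
  (hE.left (show (⟨0, y⟩ : ℂ) ∈ leftE 1 1 from ⟨rfl, hy⟩)).1

lemma right_re (hE : MapsEdges f w h) {y : ℝ} (hy : y ∈ Icc (0 : ℝ) 1) : (f ⟨1, y⟩).re = w :=
  (hE.right (show (⟨1, y⟩ : ℂ) ∈ rightE 1 1 from ⟨rfl, hy⟩)).1

lemma isUnitBilip_vert (hE : MapsEdges f a (a ^ (p - 1)))
    (hf : ∀ x ∈ bdryC 1 1, ∀ y ∈ bdryC 1 1,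
      (1 / L) * dap a p x y ≤ dist (f x) (f y) ∧ dist (f x) (f y) ≤ L * dap a p x y)
    (ha : 0 < a) {x₀ : ℝ} (hx₀ : x₀ = 0 ∨ x₀ = 1) :
    IsUnitBilip L (fun t => (f ⟨x₀, t⟩).im / a ^ (p - 1)) := by
  obtain ⟨c, hvert⟩ :
      ∃ c, ∀ t ∈ Icc (0 : ℝ) 1, (⟨x₀, t⟩ : ℂ) ∈ bdryC 1 1 ∧ (f ⟨x₀, t⟩).re = c := by
    rcases hx₀ with rfl | rfl
    exacts [⟨0, fun t ht => ⟨Or.inl (Or.inr ⟨rfl, ht⟩), hE.left_re ht⟩⟩,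
      ⟨a, fun t ht => ⟨Or.inr ⟨rfl, ht⟩, hE.right_re ht⟩⟩]
  have hx₀' : x₀ ∈ Icc (0 : ℝ) 1 := by rcases hx₀ with rfl | rfl <;> norm_num
  refine ⟨IsBilipOn.of_dist_mul (by positivity) fun s hs t ht => ?_, ?_, ?_⟩
  · have := hf _ (hvert s hs).1 _ (hvert t ht).1
    rwa [dap_of_re_eq (x := ⟨x₀, s⟩) (y := ⟨x₀, t⟩) ha.le rfl,
      Complex.dist_of_re_eq ((hvert s hs).2.trans (hvert t ht).2.symm)] at this
  · simp [hE.bottom_im hx₀']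
  · simp [hE.top_im hx₀', (Real.rpow_pos_of_pos ha _).ne']

lemma isUnitBilip_horiz (hE : MapsEdges f a (a ^ (p - 1)))
    (hf : ∀ x ∈ bdryC 1 1, ∀ y ∈ bdryC 1 1,
      (1 / L) * dap a p x y ≤ dist (f x) (f y) ∧ dist (f x) (f y) ≤ L * dap a p x y)
    (ha : 0 < a) {y₀ : ℝ} (hy₀ : y₀ = 0 ∨ y₀ = 1) :
    IsUnitBilip L (fun t => (f ⟨t, y₀⟩).re / a) := by
  obtain ⟨c, hhoriz⟩ :
      ∃ c, ∀ t ∈ Icc (0 : ℝ) 1, (⟨t, y₀⟩ : ℂ) ∈ bdryC 1 1 ∧ (f ⟨t, y₀⟩).im = c := by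
    rcases hy₀ with rfl | rfl
    exacts [⟨0, fun t ht => ⟨Or.inl (Or.inl (Or.inl ⟨rfl, ht⟩)), hE.bottom_im ht⟩⟩,
      ⟨a ^ (p - 1), fun t ht => ⟨Or.inl (Or.inl (Or.inr ⟨rfl, ht⟩)), hE.top_im ht⟩⟩]
  have hy₀' : y₀ ∈ Icc (0 : ℝ) 1 := by rcases hy₀ with rfl | rfl <;> norm_num
  refine ⟨IsBilipOn.of_dist_mul ha fun s hs t ht => ?_, ?_, ?_⟩
  · have := hf _ (hhoriz s hs).1 _ (hhoriz t ht).1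
    rwa [dap_of_im_eq (x := ⟨s, y₀⟩) (y := ⟨t, y₀⟩) ha.le rfl,
      Complex.dist_of_im_eq ((hhoriz s hs).2.trans (hhoriz t ht).2.symm)] at this
  · simp [hE.left_re hy₀']
  · simp [hE.right_re hy₀', ha.ne']

lemma eqOn_rectExt (hE : MapsEdges f a h) (ha : a ≠ 0) (hh : h ≠ 0) :
    EqOn (rectExt a h (fun t => (f ⟨0, t⟩).im / h) (fun t => (f ⟨1, t⟩).im / h)
      (fun t => (f ⟨t, 0⟩).re / a) (fun t => (f ⟨t, 1⟩).re / a)) f (bdryC 1 1) := by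
  have h0 : (0 : ℝ) ∈ Icc 0 1 := left_mem_Icc.2 zero_le_one
  have h1 : (1 : ℝ) ∈ Icc 0 1 := right_mem_Icc.2 zero_le_one
  rintro ⟨x, y⟩ (((⟨rfl, hx⟩ | ⟨rfl, hx⟩) | ⟨rfl, hy⟩) | ⟨rfl, hy⟩) <;>
    apply Complex.ext <;>
    simp_all [rectExt, vertInterp, horizInterp, hE.bottom_im, hE.top_im, hE.left_re,
      hE.right_re, mul_div_cancel₀]

end MapsEdges

lemma rpow_le_sq_mul_rpow {x y c p : ℝ} (hx : 0 ≤ x) (hc : 1 ≤ c) (hp : 0 ≤ p) (hp2 : p ≤ 2)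
    (hxy : x ≤ c * y) : x ^ p ≤ c ^ 2 * y ^ p := by
  have hy : 0 ≤ y := nonneg_of_mul_nonneg_right (hx.trans hxy) (by linarith)
  calc x ^ p ≤ (c * y) ^ p := Real.rpow_le_rpow hx hxy hp
    _ = c ^ p * y ^ p := Real.mul_rpow (by linarith) hy
    _ ≤ c ^ (2 : ℝ) * y ^ p := by gcongr
    _ = c ^ 2 * y ^ p := by rw [Real.rpow_two]

lemma rpow_comparable {x y j c K p : ℝ} (hx : 0 ≤ x) (hy : 0 ≤ y) (hc : 1 ≤ c) (hK : 0 < K)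
    (hp : 0 ≤ p) (hp2 : p ≤ 2) (hxy : x ≤ c * y) (hyx : y ≤ c * x) (hj : j ≤ K * y ^ p)
    (hj' : y ^ p ≤ K * j) :
    1 / (c ^ 2 * K) * j ≤ x ^ p ∧ x ^ p ≤ c ^ 2 * K * j := by
  have hxp := rpow_le_sq_mul_rpow hx hc hp hp2 hxy
  have hyp := rpow_le_sq_mul_rpow hy hc hp hp2 hyx
  constructor
  · rw [one_div, inv_mul_le_iff₀ (by positivity)]
    calc j ≤ K * y ^ p := hj
      _ ≤ K * (c ^ 2 * x ^ p) := by gcongr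
      _ = c ^ 2 * K * x ^ p := by ring
  · calc x ^ p ≤ c ^ 2 * y ^ p := hxp
      _ ≤ c ^ 2 * (K * j) := by gcongr
      _ = c ^ 2 * K * j := by ring

/-- **Lemma 9.1 (a version of Tukia's lemma).**
Let `S = [0,1]²`, `R = [0,a] × [0,a^(p-1)]` with `a ≥ 1`, `1 < p < 2`.  Given an
orientation-preserving `L`-bilipschitz homeomorphism `f : (∂S, ‖·‖_{a,p}) → (∂R, |·|)` mapping
the edges of `S` to the corresponding edges of `R`, there is a homeomorphic extension
`F : S → R` of `f` with `(1/C(L,p)) J_F ≤ |DF|^p ≤ C(L,p) J_F` almost everywhere, where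
`C(L,p)` depends only on `L` and `p`. -/
theorem tukia_lemma (p L : ℝ) (hp : 1 < p) (hp' : p < 2) (hL : 1 ≤ L) :
    ∃ C : ℝ, 0 < C ∧
      ∀ a : ℝ, 1 ≤ a →
      ∀ f : ℂ → ℂ,
        Set.BijOn f (bdryC 1 1) (bdryC a (a ^ (p - 1))) →
        f '' bottomE 1 1 = bottomE a (a ^ (p - 1)) →
        f '' topE 1 1 = topE a (a ^ (p - 1)) →
        f '' leftE 1 1 = leftE a (a ^ (p - 1)) →
        f '' rightE 1 1 = rightE a (a ^ (p - 1)) →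
        (∀ x ∈ bdryC 1 1, ∀ y ∈ bdryC 1 1,
          (1 / L) * dap a p x y ≤ dist (f x) (f y) ∧
          dist (f x) (f y) ≤ L * dap a p x y) →
        ∃ F : ℂ → ℂ,
          ContinuousOn F (rectC 1 1) ∧
          Set.BijOn F (rectC 1 1) (rectC a (a ^ (p - 1))) ∧
          (∀ z ∈ bdryC 1 1, F z = f z) ∧
          (∀ᵐ z ∂(volume.restrict (rectC 1 1)),
            DifferentiableAt ℝ F z ∧
            (1 / C) * |(fderiv ℝ F z).det| ≤ ‖fderiv ℝ F z‖ ^ p ∧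
            ‖fderiv ℝ F z‖ ^ p ≤ C * |(fderiv ℝ F z).det|) := by
  have hL0 : 0 < L := by linarith
  refine ⟨(5 * L ^ 3) ^ 2 * L ^ 2, by positivity,
    fun a ha f _ hbot htop hleft hright hf => ?_⟩
  have ha0 : 0 < a := by linarith
  have hh0 : 0 < a ^ (p - 1) := by positivity
  have hha : a ^ (p - 1) ≤ a := by
    simpa using Real.rpow_le_rpow_of_exponent_le ha (by linarith : p - 1 ≤ 1)
  have hpow : a * a ^ (p - 1) = a ^ p := by
    rw [← Real.rpow_one_add' ha0.le (by linarith), add_sub_cancel]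
  have hE : MapsEdges f a (a ^ (p - 1)) :=
    ⟨mapsTo_iff_image_subset.2 hbot.subset, mapsTo_iff_image_subset.2 htop.subset,
      mapsTo_iff_image_subset.2 hleft.subset, mapsTo_iff_image_subset.2 hright.subset⟩
  have hψ₀ := hE.isUnitBilip_vert hf ha0 (Or.inl rfl)
  have hψ₁ := hE.isUnitBilip_vert hf ha0 (Or.inr rfl)
  have hΦ₀ := hE.isUnitBilip_horiz hf ha0 (Or.inl rfl)
  have hΦ₁ := hE.isUnitBilip_horiz hf ha0 (Or.inr rfl)
  refine ⟨_, hψ₀.continuousOn_rectExt hψ₁ hΦ₀ hΦ₁ hL0, hψ₀.bijOn_rectExt hψ₁ hΦ₀ hΦ₁ hL0 ha0 hh0,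
    hE.eqOn_rectExt ha0.ne' hh0.ne', ?_⟩
  filter_upwards [hψ₀.ae_rectExt hψ₁ hΦ₀ hΦ₁ hL hh0.le hha] with z ⟨hdiff, hN, hN', hJ, hJ'⟩
  rw [hpow] at hJ hJ'
  have hc : 1 ≤ 5 * L ^ 3 := by nlinarith [one_le_pow₀ (n := 3) hL]
  exact ⟨hdiff, rpow_comparable (norm_nonneg _) ha0.le hc (by positivity) (by linarith) hp'.le
    hN hN' hJ hJ'⟩
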